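/- Every cocartesian fibration over a quasicategory is an isofibration: if p : X → C is a cocartesian fibration with C a quasicategory, then for any object x ∈ X₀ and any equivalence f : p(x) → b in C, there exists an equivalence φ : x → y in X with p(φ) = f. -/

import Mathlib

open CategoryTheory Simplicial SSet Opposite

universe v u

/-- An *inner fibration* is a map of simplicial sets with the right lifting property
with respect to the inner horn inclusions `Λ[n, i] ↪ Δ[n]` for `n ≥ 2` and `0 < i < n`. -/
def IsInnerFibration {X S : SSet.{u}} (p : X ⟶ S) : Prop :=
  ∀ ⦃n : ℕ⦄ ⦃i : Fin (n + 1)⦄, 2 ≤ n → 0 < (i : ℕ) → (i : ℕ) < n →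
    HasLiftingProperty (Λ[n, i].ι) p

/-- The edge of the horn `Λ[n, 0]` from vertex `0` to vertex `1` (needs `n ≥ 2`),
i.e. the image of `Δ^{0,1} ↪ Λ[n, 0]`. -/
def hornEdge01 (n : ℕ) (hn : 2 ≤ n) : (Λ[n, 0] : SSet) _⦋1⦌ :=
  horn.edge n 0 0 1 (Fin.zero_le _) (by
    rw [show ({0, 0, 1} : Finset (Fin (n + 1))) = {0, 1} by simp]
    refine le_trans (Finset.card_insert_le _ _) (by simpa using hn))

/-- An edge `e` of `X` is *`p`-cocartesian* if for every `n ≥ 2`, every map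
`F : Λ[n, 0] ⟶ X` whose restriction to `Δ^{0,1}` is `e`, and every commutative
square over a given `n`-simplex of `S`, a lift `Δ[n] ⟶ X` exists. -/
def IsCocartesianEdge {X S : SSet.{u}} (p : X ⟶ S) (e : X _⦋1⦌) : Prop :=
  ∀ ⦃n : ℕ⦄ (hn : 2 ≤ n) (F : (Λ[n, 0] : SSet) ⟶ X) (σ : Δ[n] ⟶ S),
    F.app (op ⦋1⦌) (hornEdge01 n hn) = e →
    F ≫ p = Λ[n, 0].ι ≫ σ →
    ∃ G : Δ[n] ⟶ X, Λ[n, 0].ι ≫ G = F ∧ G ≫ p = σ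

/-- A *cocartesian fibration* is an inner fibration `p : X ⟶ S` such that for every
edge `η : s → t` of `S` and every vertex `x` of `X` over `s`, there is a
`p`-cocartesian edge `e : x → y` of `X` lying over `η`. -/
def IsCocartesianFibration {X S : SSet.{u}} (p : X ⟶ S) : Prop :=
  IsInnerFibration p ∧
    ∀ (η : S _⦋1⦌) (x : X _⦋0⦌), p.app (op ⦋0⦌) x = S.δ 1 η →
      ∃ e : X _⦋1⦌, X.δ 1 e = x ∧ p.app (op ⦋1⦌) e = η ∧ IsCocartesianEdge p e

/-- An edge `f` of a simplicial set `X` is an *equivalence* if it becomes an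
isomorphism in the homotopy category `hX`, i.e. it admits a two-sided homotopy
inverse `g`, witnessed by `2`-simplices exhibiting `g ∘ f ≃ id` and `f ∘ g ≃ id`. -/
def IsEquivEdge (X : SSet.{u}) (f : X _⦋1⦌) : Prop :=
  ∃ g : X _⦋1⦌, X.δ 1 g = X.δ 0 f ∧ X.δ 0 g = X.δ 1 f ∧
    (∃ σ : X _⦋2⦌, X.δ 0 σ = g ∧ X.δ 2 σ = f ∧ X.δ 1 σ = X.σ 0 (X.δ 1 f)) ∧
    (∃ τ : X _⦋2⦌, X.δ 0 τ = f ∧ X.δ 2 τ = g ∧ X.δ 1 τ = X.σ 0 (X.δ 0 f))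

/-!
Let `φ : x ⟶ y` be a `p`-cocartesian lift of `f`, and let `g` be a homotopy inverse of `f`.
Since `X` is inner fibred over a quasicategory, it is itself a quasicategory and we may compute
in its homotopy category. Lifting the `2`-simplex witnessing `f ≫ g = 𝟙` along `φ` gives `ψ`
over `g` with `φ ≫ ψ = 𝟙`, so `θ := ψ ≫ φ` is idempotent and lies over `g ≫ f ≃ 𝟙`.
Cocartesianness of `φ` then lets us lift a `3`-simplex of `C` relating `φ ≫ θ = φ` to the
trivial factorization `φ ≫ 𝟙 = φ`; its missing face exhibits a right inverse of `θ`.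
An idempotent with a right inverse is the identity, so `ψ ≫ φ = 𝟙` and `φ` is an equivalence.
-/

lemma CategoryTheory.comp_eq_id_of_isSplitMono {𝒞 : Type*} [Category 𝒞] {a b : 𝒞}
    {f : a ⟶ b} {g : b ⟶ a} (hfg : f ≫ g = 𝟙 a) [IsSplitMono (g ≫ f)] : g ≫ f = 𝟙 b := by
  rw [← cancel_mono (g ≫ f)]
  simp [reassoc_of% hfg]

namespace SSet

section

variable {X : SSet.{u}} {n : ℕ} {i : Fin (n + 3)}

lemma horn.isCompatible_yonedaEquiv_symm {T : ∀ j : Fin (n + 3), j ≠ i → X _⦋n + 1⦌}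
    (hT : ∀ (j k : Fin (n + 3)) (hj : j ≠ i) (hk : k ≠ i) (hjk : j < k),
      X.δ (k.pred (Fin.ne_zero_of_lt hjk)) (T j hj) =
        X.δ (j.castPred (Fin.ne_last_of_lt hjk)) (T k hk)) :
    horn.IsCompatible (fun j hj ↦ yonedaEquiv.symm (T j hj)) := by
  intro j k hj hk hjk
  simp only [stdSimplex.δ_comp_yonedaEquiv_symm, hT j k hj hk hjk]

lemma horn.δ_yonedaEquiv {F : (Λ[n + 2, i] : SSet) ⟶ X} {G : Δ[n + 2] ⟶ X}
    (hG : Λ[n + 2, i].ι ≫ G = F) (j : Fin (n + 3)) (hj : j ≠ i) :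
    X.δ j (yonedaEquiv G) = yonedaEquiv (horn.ι i j hj ≫ F) := by
  rw [← stdSimplex.yonedaEquiv_δ_comp, ← hG, ← horn.ι_ι_assoc i j hj]

lemma horn.app_face (F : (Λ[n + 2, i] : SSet) ⟶ X) (j : Fin (n + 3)) (hj : j ≠ i) :
    F.app _ (horn.face i j hj) = yonedaEquiv (horn.ι i j hj ≫ F) := by
  rw [yonedaEquiv_comp, horn.yonedaEquiv_ι]

lemma Quasicategory.exists_simplex_of_isCompatible [Quasicategory X]
    (h₀ : 0 < i) (hₙ : i < Fin.last (n + 2)) {T : ∀ j : Fin (n + 3), j ≠ i → X _⦋n + 1⦌}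
    (hT : horn.IsCompatible (fun j hj ↦ yonedaEquiv.symm (T j hj))) :
    ∃ w : X _⦋n + 2⦌, ∀ j hj, X.δ j w = T j hj := by
  obtain ⟨G, hG⟩ := Quasicategory.hornFilling' hT.desc h₀ hₙ
  exact ⟨yonedaEquiv G, fun j hj ↦ by
    rw [horn.δ_yonedaEquiv hG.symm, hT.ι_desc, Equiv.apply_symm_apply]⟩

end

section

open Edge

variable {X : SSet.{u}} [Quasicategory X] {x₀ x₁ x₂ x₃ : X _⦋0⦌}
  {e₀₁ : Edge x₀ x₁} {e₁₂ : Edge x₁ x₂} {e₂₃ : Edge x₂ x₃}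
  {e₀₂ : Edge x₀ x₂} {e₁₃ : Edge x₁ x₃} {e₀₃ : Edge x₀ x₃}

lemma Quasicategory.nonempty_compStruct_of_horn₂₁ (e₀₁ : Edge x₀ x₁) (e₁₂ : Edge x₁ x₂) :
    ∃ e₀₂ : Edge x₀ x₂, Nonempty (CompStruct e₀₁ e₁₂ e₀₂) := by
  -- the entry of `T` at the missing face `1` is never read
  obtain ⟨w, hw⟩ := Quasicategory.exists_simplex_of_isCompatible (i := 1) (by decide) (by decide)
    (T := fun j _ ↦ ![e₁₂.edge, e₁₂.edge, e₀₁.edge] j) (horn.isCompatible_yonedaEquiv_symm (by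
      intro j k hj hk hjk
      fin_cases j <;> fin_cases k
      all_goals first
        | exact absurd hjk (by decide)
        | simp_all))
  have h₀ : X.δ 0 w = e₁₂.edge := hw 0 (by decide)
  have h₂ : X.δ 2 w = e₀₁.edge := hw 2 (by decide)
  refine ⟨Edge.mk (X.δ 1 w) ?_ ?_, ⟨CompStruct.mk w h₂ h₀ rfl⟩⟩
  · calc X.δ 1 (X.δ 1 w) = X.δ 1 (X.δ 2 w) := (δ_comp_δ_apply (i := 1) (j := 1) le_rfl w).symm
      _ = x₀ := by rw [h₂, e₀₁.src_eq]
  · calc X.δ 0 (X.δ 1 w) = X.δ 0 (X.δ 0 w) := δ_comp_δ_apply (i := 0) (j := 0) le_rfl w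
      _ = x₂ := by rw [h₀, e₁₂.tgt_eq]

lemma Quasicategory.exists_simplex_of_horn₃₁ (f₃ : CompStruct e₀₁ e₁₂ e₀₂)
    (f₀ : CompStruct e₁₂ e₂₃ e₁₃) (f₂ : CompStruct e₀₁ e₁₃ e₀₃) :
    ∃ S : X _⦋3⦌, X.δ 0 S = f₀.simplex ∧ X.δ 2 S = f₂.simplex ∧ X.δ 3 S = f₃.simplex ∧
      ∃ f₁ : CompStruct e₀₂ e₂₃ e₀₃, f₁.simplex = X.δ 1 S := by
  obtain ⟨S, hS⟩ := Quasicategory.exists_simplex_of_isCompatible (i := 1) (by decide) (by decide)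
    (T := fun j _ ↦ ![f₀.simplex, f₀.simplex, f₂.simplex, f₃.simplex] j)
    (horn.isCompatible_yonedaEquiv_symm (by
      intro j k hj hk hjk
      fin_cases j <;> fin_cases k
      all_goals first
        | exact absurd hjk (by decide)
        | simp_all [Fin.castPred, Fin.castLT]))
  have h₀ : X.δ 0 S = f₀.simplex := hS 0 (by decide)
  have h₂ : X.δ 2 S = f₂.simplex := hS 2 (by decide)
  have h₃ : X.δ 3 S = f₃.simplex := hS 3 (by decide)
  refine ⟨S, h₀, h₂, h₃, CompStruct.mk (X.δ 1 S) ?_ ?_ ?_, rfl⟩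
  · calc X.δ 2 (X.δ 1 S) = X.δ 1 (X.δ 3 S) := (δ_comp_δ_apply (i := 1) (j := 2) (by decide) S).symm
      _ = e₀₂.edge := by rw [h₃, f₃.d₁]
  · calc X.δ 0 (X.δ 1 S) = X.δ 0 (X.δ 0 S) := δ_comp_δ_apply (i := 0) (j := 0) le_rfl S
      _ = e₂₃.edge := by rw [h₀, f₀.d₀]
  · calc X.δ 1 (X.δ 1 S) = X.δ 1 (X.δ 2 S) := (δ_comp_δ_apply (i := 1) (j := 1) le_rfl S).symm
      _ = e₀₃.edge := by rw [h₂, f₂.d₁]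

lemma Quasicategory.nonempty_compStruct_of_horn₃₂ (f₃ : CompStruct e₀₁ e₁₂ e₀₂)
    (f₀ : CompStruct e₁₂ e₂₃ e₁₃) (f₁ : CompStruct e₀₂ e₂₃ e₀₃) :
    Nonempty (CompStruct e₀₁ e₁₃ e₀₃) := by
  obtain ⟨S, hS⟩ := Quasicategory.exists_simplex_of_isCompatible (i := 2) (by decide) (by decide)
    (T := fun j _ ↦ ![f₀.simplex, f₁.simplex, f₁.simplex, f₃.simplex] j)
    (horn.isCompatible_yonedaEquiv_symm (by
      intro j k hj hk hjk
      fin_cases j <;> fin_cases k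
      all_goals first
        | exact absurd hjk (by decide)
        | simp_all [Fin.castPred, Fin.castLT]))
  have h₀ : X.δ 0 S = f₀.simplex := hS 0 (by decide)
  have h₁ : X.δ 1 S = f₁.simplex := hS 1 (by decide)
  have h₃ : X.δ 3 S = f₃.simplex := hS 3 (by decide)
  refine ⟨CompStruct.mk (X.δ 2 S) ?_ ?_ ?_⟩
  · calc X.δ 2 (X.δ 2 S) = X.δ 2 (X.δ 3 S) := (δ_comp_δ_apply (i := 2) (j := 2) le_rfl S).symm
      _ = e₀₁.edge := by rw [h₃, f₃.d₂]
  · calc X.δ 0 (X.δ 2 S) = X.δ 1 (X.δ 0 S) := δ_comp_δ_apply (i := 0) (j := 1) (by decide) S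
      _ = e₁₃.edge := by rw [h₀, f₀.d₁]
  · calc X.δ 1 (X.δ 2 S) = X.δ 1 (X.δ 1 S) := δ_comp_δ_apply (i := 1) (j := 1) le_rfl S
      _ = e₀₃.edge := by rw [h₁, f₁.d₁]

instance Quasicategory.quasicategory₂_truncation :
    Truncated.Quasicategory₂ ((truncation 2).obj X) where
  fill21 e₀₁ e₁₂ := by
    obtain ⟨e₀₂, ⟨f⟩⟩ := nonempty_compStruct_of_horn₂₁ (ofTruncated e₀₁) (ofTruncated e₁₂)
    exact ⟨⟨e₀₂.toTruncated, f.toTruncated⟩⟩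
  fill31 f₃ f₀ f₂ := by
    obtain ⟨-, -, -, -, f₁, -⟩ := exists_simplex_of_horn₃₁ (CompStruct.ofTruncated f₃)
      (CompStruct.ofTruncated f₀) (CompStruct.ofTruncated f₂)
    exact ⟨f₁.toTruncated⟩
  fill32 f₃ f₀ f₁ := nonempty_compStruct_of_horn₃₂ (CompStruct.ofTruncated f₃)
    (CompStruct.ofTruncated f₀) (CompStruct.ofTruncated f₁)

lemma Edge.CompStruct.nonempty_iff_homMk :
    Nonempty (CompStruct e₀₁ e₁₂ e₀₂) ↔
      Truncated.HomotopyCategory₂.homMk e₀₁.toTruncated ≫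
        Truncated.HomotopyCategory₂.homMk e₁₂.toTruncated =
          Truncated.HomotopyCategory₂.homMk e₀₂.toTruncated :=
  Truncated.Edge.CompStruct.nonempty_iff

end

end SSet

open SSet Edge Truncated.HomotopyCategory₂

lemma hornEdge01_two : hornEdge01.{u} 2 le_rfl = horn.face 0 2 (by decide) := by
  apply Subtype.ext
  apply SSet.stdSimplex.ext
  intro k
  fin_cases k <;> rfl

lemma hornEdge01_three :
    hornEdge01.{u} 3 (by decide) =
      (Λ[3, 0] : SSet.{u}).map (SimplexCategory.δ 2).op (horn.face 0 3 (by decide)) := by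
  apply Subtype.ext
  apply SSet.stdSimplex.ext
  intro k
  fin_cases k <;> rfl

lemma IsInnerFibration.innerFibration {X S : SSet.{u}} {p : X ⟶ S} (hp : IsInnerFibration p) :
    InnerFibration p :=
  ⟨fun _ _ _ ⟨_, h₀, hₙ⟩ ↦ hp (by omega) h₀ hₙ⟩

lemma isEquivEdge_iff_nonempty_invStruct {X : SSet.{u}} {x₀ x₁ : X _⦋0⦌} (e : Edge x₀ x₁) :
    IsEquivEdge X e.edge ↔ Nonempty (InvStruct e) := by
  constructor
  · rintro ⟨g, hg₁, hg₀, ⟨σ, hσ₀, hσ₂, hσ₁⟩, ⟨τ, hτ₀, hτ₂, hτ₁⟩⟩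
    let inv : Edge x₁ x₀ := Edge.mk g (by rw [hg₁, e.tgt_eq]) (by rw [hg₀, e.src_eq])
    exact ⟨⟨inv, CompStruct.mk σ hσ₂ hσ₀ (by rw [hσ₁, e.src_eq]; rfl),
      CompStruct.mk τ hτ₂ hτ₀ (by rw [hτ₁, e.tgt_eq]; rfl)⟩⟩
  · rintro ⟨I⟩
    exact ⟨I.inv.edge, by simp, by simp, ⟨I.homInvId.simplex, by simp, by simp, by simp⟩,
      ⟨I.invHomId.simplex, by simp, by simp, by simp⟩⟩

section

variable {X C : SSet.{u}} {p : X ⟶ C}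

lemma IsCocartesianEdge.exists_simplex {φ : X _⦋1⦌} (hφ : IsCocartesianEdge p φ) {n : ℕ}
    {T : ∀ j : Fin (n + 3), j ≠ 0 → X _⦋n + 1⦌}
    (hT : horn.IsCompatible (fun j hj ↦ yonedaEquiv.symm (T j hj)))
    (hTφ : hT.desc.app _ (hornEdge01 (n + 2) (by omega)) = φ)
    (S : C _⦋n + 2⦌) (hS : ∀ j hj, p.app _ (T j hj) = C.δ j S) :
    ∃ w : X _⦋n + 2⦌, (∀ j hj, X.δ j w = T j hj) ∧ p.app _ w = S := by
  obtain ⟨G, hG, hGp⟩ := hφ (by omega) hT.desc (yonedaEquiv.symm S) hTφ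
    (horn.hom_ext' fun j hj ↦ by simp [stdSimplex.δ_comp_yonedaEquiv_symm, hS])
  refine ⟨yonedaEquiv G, fun j hj ↦ ?_, ?_⟩
  · rw [horn.δ_yonedaEquiv hG, hT.ι_desc, Equiv.apply_symm_apply]
  · rw [← yonedaEquiv_comp, hGp, Equiv.apply_symm_apply]

variable {x₀ x₁ x₂ x₃ : X _⦋0⦌}
  {e₀₁ : Edge x₀ x₁} {e₁₂ : Edge x₁ x₂} {e₂₃ : Edge x₂ x₃}
  {e₀₂ : Edge x₀ x₂} {e₁₃ : Edge x₁ x₃} {e₀₃ : Edge x₀ x₃}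

lemma IsCocartesianEdge.exists_compStruct (he₀₁ : IsCocartesianEdge p e₀₁.edge)
    (e₀₂ : Edge x₀ x₂) (B : C _⦋2⦌) (hB₂ : p.app _ e₀₁.edge = C.δ 2 B)
    (hB₁ : p.app _ e₀₂.edge = C.δ 1 B) :
    ∃ (e₁₂ : Edge x₁ x₂) (f : CompStruct e₀₁ e₁₂ e₀₂), p.app _ f.simplex = B := by
  have hT : horn.IsCompatible (fun j (_ : j ≠ 0) ↦
      yonedaEquiv.symm (![e₀₂.edge, e₀₂.edge, e₀₁.edge] j)) :=
    horn.isCompatible_yonedaEquiv_symm (by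
      intro j k hj hk hjk
      fin_cases j <;> fin_cases k
      all_goals first
        | exact absurd hjk (by decide)
        | simp_all)
  obtain ⟨w, hw, hwp⟩ := he₀₁.exists_simplex hT
    (by rw [hornEdge01_two, horn.app_face, hT.ι_desc, Equiv.apply_symm_apply]; rfl) B (by
      intro j hj
      fin_cases j
      all_goals first
        | exact absurd rfl hj
        | simpa)
  have h₁ : X.δ 1 w = e₀₂.edge := hw 1 (by decide)
  have h₂ : X.δ 2 w = e₀₁.edge := hw 2 (by decide)
  refine ⟨Edge.mk (X.δ 0 w) ?_ ?_, CompStruct.mk w h₂ rfl h₁, hwp⟩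
  · calc X.δ 1 (X.δ 0 w) = X.δ 0 (X.δ 2 w) := (δ_comp_δ_apply (i := 0) (j := 1) (by decide) w).symm
      _ = x₁ := by rw [h₂, e₀₁.tgt_eq]
  · calc X.δ 0 (X.δ 0 w) = X.δ 0 (X.δ 1 w) := (δ_comp_δ_apply (i := 0) (j := 0) le_rfl w).symm
      _ = x₂ := by rw [h₁, e₀₂.tgt_eq]

lemma IsCocartesianEdge.nonempty_compStruct (he₀₁ : IsCocartesianEdge p e₀₁.edge)
    (f₃ : CompStruct e₀₁ e₁₂ e₀₂) (f₂ : CompStruct e₀₁ e₁₃ e₀₃) (f₁ : CompStruct e₀₂ e₂₃ e₀₃)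
    (S : C _⦋3⦌) (h₁ : p.app _ f₁.simplex = C.δ 1 S) (h₂ : p.app _ f₂.simplex = C.δ 2 S)
    (h₃ : p.app _ f₃.simplex = C.δ 3 S) :
    Nonempty (CompStruct e₁₂ e₂₃ e₁₃) := by
  have hT : horn.IsCompatible (fun j (_ : j ≠ 0) ↦
      yonedaEquiv.symm (![f₁.simplex, f₁.simplex, f₂.simplex, f₃.simplex] j)) :=
    horn.isCompatible_yonedaEquiv_symm (by
      intro j k hj hk hjk
      fin_cases j <;> fin_cases k
      all_goals first
        | exact absurd hjk (by decide)
        | simp_all [Fin.castPred, Fin.castLT])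
  have hTφ : hT.desc.app _ (hornEdge01 3 (by decide)) = e₀₁.edge := by
    rw [hornEdge01_three, NatTrans.naturality_apply, horn.app_face, hT.ι_desc,
      Equiv.apply_symm_apply]
    exact f₃.d₂
  obtain ⟨w, hw, -⟩ := he₀₁.exists_simplex hT hTφ S (by
    intro j hj
    fin_cases j
    all_goals first
      | exact absurd rfl hj
      | simpa)
  have h₁ : X.δ 1 w = f₁.simplex := hw 1 (by decide)
  have h₂ : X.δ 2 w = f₂.simplex := hw 2 (by decide)
  have h₃ : X.δ 3 w = f₃.simplex := hw 3 (by decide)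
  refine ⟨CompStruct.mk (X.δ 0 w) ?_ ?_ ?_⟩
  · calc X.δ 2 (X.δ 0 w) = X.δ 0 (X.δ 3 w) := (δ_comp_δ_apply (i := 0) (j := 2) (by decide) w).symm
      _ = e₁₂.edge := by rw [h₃, f₃.d₀]
  · calc X.δ 0 (X.δ 0 w) = X.δ 0 (X.δ 1 w) := (δ_comp_δ_apply (i := 0) (j := 0) le_rfl w).symm
      _ = e₂₃.edge := by rw [h₁, f₁.d₀]
  · calc X.δ 1 (X.δ 0 w) = X.δ 0 (X.δ 2 w) := (δ_comp_δ_apply (i := 0) (j := 1) (by decide) w).symm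
      _ = e₁₃.edge := by rw [h₂, f₂.d₀]

variable [Quasicategory C] {x y : X _⦋0⦌} {φ : Edge x y}

lemma IsCocartesianEdge.exists_rightInverse (hφ : IsCocartesianEdge p φ.edge) {θ : Edge y y}
    (u : CompStruct φ θ φ) (hθ : Nonempty (CompStruct (θ.map p) (Edge.id _) (Edge.id _))) :
    ∃ c : Edge y y, Nonempty (CompStruct θ c (Edge.id y)) := by
  -- `S` has faces `pθ ≃ 𝟙`, `ρ`, `σ₁ (pφ)`, `pu`; lifting `ρ` along `φ` produces `c`, and the
  -- lift of `S` itself has `θ ≫ c = 𝟙` as its missing face.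
  obtain ⟨S, -, hS₂, hS₃, ρ, hρ⟩ :=
    Quasicategory.exists_simplex_of_horn₃₁ (u.map p) hθ.some (CompStruct.compId (φ.map p))
  obtain ⟨c, u', hu'⟩ := hφ.exists_compStruct φ ρ.simplex (by simp) (by simp)
  refine ⟨c, hφ.nonempty_compStruct u (CompStruct.compId φ) u' S (by rw [hu', hρ]) ?_
    (by rw [hS₃]; rfl)⟩
  rw [hS₂]
  exact σ_naturality_apply p 1 φ.edge

lemma IsCocartesianEdge.nonempty_invStruct [Quasicategory X] (hφ : IsCocartesianEdge p φ.edge)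
    (I : InvStruct (φ.map p)) : Nonempty (InvStruct φ) := by
  obtain ⟨ψ, t, ht⟩ := hφ.exists_compStruct (Edge.id x) I.homInvId.simplex (by simp)
    (by simp [σ_naturality_apply])
  have hψ : ψ.map p = I.inv := Edge.ext (by
    rw [map_edge, ← t.d₀, δ_naturality_apply, ht, I.homInvId.d₀])
  obtain ⟨θ, ⟨v⟩⟩ := Quasicategory.nonempty_compStruct_of_horn₂₁ ψ φ
  have hφψ : homMk φ.toTruncated ≫ homMk ψ.toTruncated = 𝟙 _ :=
    t.toTruncated.homotopyCategory₂_fac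
  have hψφ : homMk ψ.toTruncated ≫ homMk φ.toTruncated = homMk θ.toTruncated :=
    v.toTruncated.homotopyCategory₂_fac
  obtain ⟨u⟩ : Nonempty (CompStruct φ θ φ) := CompStruct.nonempty_iff_homMk.2 (by
    rw [← hψφ, ← Category.assoc, hφψ, Category.id_comp])
  have hθ : Nonempty (CompStruct (θ.map p) (Edge.id _) (Edge.id _)) :=
    CompStruct.nonempty_iff_homMk.2 (by
      rw [← (v.map p).toTruncated.homotopyCategory₂_fac, hψ,
        I.invHomId.toTruncated.homotopyCategory₂_fac]
      exact Category.comp_id _)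
  obtain ⟨c, ⟨w⟩⟩ := hφ.exists_rightInverse u hθ
  have : IsSplitMono (homMk ψ.toTruncated ≫ homMk φ.toTruncated) :=
    .mk' ⟨homMk c.toTruncated, by rw [hψφ]; exact w.toTruncated.homotopyCategory₂_fac⟩
  exact ⟨⟨ψ, t, (CompStruct.nonempty_iff_homMk.2 (comp_eq_id_of_isSplitMono hφψ)).some⟩⟩

end

/-- Every cocartesian fibration over a quasicategory is an isofibration: equivalences
in the base with a given lift of the source lift to equivalences in the total space. -/
theorem isofibration_of_isCocartesianFibration {X C : SSet.{u}} [Quasicategory C]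
    (p : X ⟶ C) (hp : IsCocartesianFibration p)
    (x : X _⦋0⦌) (f : C _⦋1⦌) (hf : IsEquivEdge C f) (hsrc : C.δ 1 f = p.app (op ⦋0⦌) x) :
    ∃ φ : X _⦋1⦌, IsEquivEdge X φ ∧ X.δ 1 φ = x ∧ p.app (op ⦋1⦌) φ = f := by
  have := hp.1.innerFibration
  have := quasicategory_of_innerFibration p
  obtain ⟨φ, hφx, hφp, hφ⟩ := hp.2 f x hsrc.symm
  obtain ⟨I⟩ := (isEquivEdge_iff_nonempty_invStruct (mk' f)).1 hf
  obtain ⟨J⟩ := hφ.nonempty_invStruct (φ := mk' φ) (I.ofEq hφp.symm)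
  exact ⟨φ, (isEquivEdge_iff_nonempty_invStruct (mk' φ)).2 ⟨J⟩, hφx, hφp⟩
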